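/- Let θ > p be the exponent from the integral estimate for optimal curves (depending only on M, δ, p, T). Then there exist constants K₂ = K₂(M,δ,p,T) and K₃ = K₃(M,δ,p,T) > 0 such that for every τ > 0, every x₀ ∈ ℝ^N, and all t₀ < t₁ ≤ T − τ with t₁ − t₀ ≤ K₃ τ^{(2θp − p − θ)/(p(θ−1))}, one has |u(x₀,t₀) − u(x₀,t₁)| ≤ K₂ τ^{−(θ−p)/θ} (t₁ − t₀)^{(θ−p)/θ}. -/

import Mathlib

open MeasureTheory Set intervalIntegral

noncomputable section

/-- The curve starting at `x` at time `t` with (a.e.) derivative `v`. -/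
def curveOf {N : ℕ} (x : EuclideanSpace ℝ (Fin N)) (t : ℝ)
    (v : ℝ → EuclideanSpace ℝ (Fin N)) : ℝ → EuclideanSpace ℝ (Fin N) :=
  fun s => x + ∫ r in t..s, v r

/-- The cost of the curve starting at `x` at time `t` with derivative `v`:
`∫_t^T a(x(s),s) |f(x(s),s) + x'(s)|^p ds + g(x(T))`. -/
def costOf {N : ℕ} (T p : ℝ) (a : EuclideanSpace ℝ (Fin N) → ℝ → ℝ)
    (f : EuclideanSpace ℝ (Fin N) → ℝ → EuclideanSpace ℝ (Fin N))
    (g : EuclideanSpace ℝ (Fin N) → ℝ)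
    (x : EuclideanSpace ℝ (Fin N)) (t : ℝ) (v : ℝ → EuclideanSpace ℝ (Fin N)) : ℝ :=
  (∫ s in t..T, a (curveOf x t v s) s * ‖f (curveOf x t v s) s + v s‖ ^ p)
    + g (curveOf x t v T)

/-- A curve (given through its derivative `v`) is admissible for initial time `t` if its
derivative belongs to `L^p([t,T])`. -/
def AdmissibleDeriv {N : ℕ} (T p t : ℝ) (v : ℝ → EuclideanSpace ℝ (Fin N)) : Prop :=
  MemLp v (ENNReal.ofReal p) (volume.restrict (Icc t T))

/-- The value function of the calculus of variations problem. -/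
def valueFn {N : ℕ} (T p : ℝ) (a : EuclideanSpace ℝ (Fin N) → ℝ → ℝ)
    (f : EuclideanSpace ℝ (Fin N) → ℝ → EuclideanSpace ℝ (Fin N))
    (g : EuclideanSpace ℝ (Fin N) → ℝ)
    (x : EuclideanSpace ℝ (Fin N)) (t : ℝ) : ℝ :=
  sInf {c : ℝ | ∃ v, AdmissibleDeriv T p t v ∧ costOf T p a f g x t v = c}

/-- A curve (given through its derivative `v`) is optimal for the initial condition `(x, t)`
if it is admissible and its cost realizes the infimum defining `valueFn`. -/
def IsOptimalCurve {N : ℕ} (T p : ℝ) (a : EuclideanSpace ℝ (Fin N) → ℝ → ℝ)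
    (f : EuclideanSpace ℝ (Fin N) → ℝ → EuclideanSpace ℝ (Fin N))
    (g : EuclideanSpace ℝ (Fin N) → ℝ)
    (x : EuclideanSpace ℝ (Fin N)) (t : ℝ) (v : ℝ → EuclideanSpace ℝ (Fin N)) : Prop :=
  AdmissibleDeriv T p t v ∧ costOf T p a f g x t v = valueFn T p a f g x t

/-- The standing assumptions : `a`, `f`, `g` are continuous, bounded by `M`, and `a ≥ δ`. -/
def StandardHyps {N : ℕ} (T M δ : ℝ) (a : EuclideanSpace ℝ (Fin N) → ℝ → ℝ)
    (f : EuclideanSpace ℝ (Fin N) → ℝ → EuclideanSpace ℝ (Fin N))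
    (g : EuclideanSpace ℝ (Fin N) → ℝ) : Prop :=
  ContinuousOn (fun q : EuclideanSpace ℝ (Fin N) × ℝ => a q.1 q.2) (univ ×ˢ Icc 0 T) ∧
  ContinuousOn (fun q : EuclideanSpace ℝ (Fin N) × ℝ => f q.1 q.2) (univ ×ˢ Icc 0 T) ∧
  Continuous g ∧
  (∀ x t, t ∈ Icc 0 T → |a x t| ≤ M) ∧
  (∀ x t, t ∈ Icc 0 T → ‖f x t‖ ≤ M) ∧
  (∀ x, |g x| ≤ M) ∧
  (∀ x t, t ∈ Icc 0 T → δ ≤ a x t)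

/-!
Both inequalities come from splicing optimal curves. From `(x₀, t₀)` one may rest at `x₀` until
`t₁` and then follow an optimal curve from `(x₀, t₁)`, which costs at most `M · M ^ p · (t₁ - t₀)`
more than `u(x₀, t₁)`. From `(x₀, t₁)` one may instead travel at constant velocity to the point
that an optimal curve `x(·)` from `(x₀, t₀)` reaches at time `c = t₁ + (t₁ - t₀)`, and follow
`x(·)` afterwards. Dropping the (nonnegative) running cost of `x(·)` on `[t₀, c]`, this costs at
most `M (M + R / (t₁ - t₀)) ^ p (t₁ - t₀)` more than `u(x₀, t₀)`, where the integral estimate gives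
`R = C (T - t₀) ^ (1/θ - 1/p) (2 (t₁ - t₀)) ^ (1 - 1/θ)`; since `T - t₀ ≥ τ`, this is
`O(τ ^ (-(θ-p)/θ) (t₁ - t₀) ^ ((θ-p)/θ))`. The choice of `K₃` forces `t₁ - t₀ ≤ τ`, so `c ≤ T`.
-/

namespace Real

lemma rpow_add_le_mul_rpow_add_rpow {a b p : ℝ} (ha : 0 ≤ a) (hb : 0 ≤ b) (hp : 1 ≤ p) :
    (a + b) ^ p ≤ 2 ^ (p - 1) * (a ^ p + b ^ p) := by
  lift a to NNReal using ha
  lift b to NNReal using hb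
  exact_mod_cast NNReal.rpow_add_le_mul_rpow_add_rpow a b hp

lemma le_of_le_rpow_one_sub_mul_rpow {Δ τ T β : ℝ} (hτ : 0 < τ) (hτT : τ ≤ T) (hβ : 1 ≤ β)
    (hΔ : Δ ≤ T ^ (1 - β) * τ ^ β) : Δ ≤ τ := by
  have hT : 0 < T := hτ.trans_le hτT
  calc Δ ≤ T ^ (1 - β) * τ ^ β := hΔ
    _ = T ^ (1 - β) * τ ^ (β - 1) * τ := by
      rw [mul_assoc, ← rpow_add_one hτ.ne', sub_add_cancel]
    _ ≤ T ^ (1 - β) * T ^ (β - 1) * τ := by gcongr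
    _ = τ := by rw [← rpow_add hT]; norm_num

lemma le_mul_rpow_neg_mul_rpow {Δ τ T γ : ℝ} (hΔ : 0 < Δ) (hΔτ : Δ ≤ τ) (hτT : τ ≤ T)
    (hγ : γ ≤ 1) : Δ ≤ T * τ ^ (-γ) * Δ ^ γ := by
  have hτ : 0 < τ := hΔ.trans_le hΔτ
  calc Δ = Δ ^ (1 - γ) * Δ ^ γ := by rw [← rpow_add hΔ]; simp
    _ ≤ τ ^ (1 - γ) * Δ ^ γ := by gcongr
    _ = τ * τ ^ (-γ) * Δ ^ γ := by rw [sub_eq_add_neg, rpow_add hτ, rpow_one]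
    _ ≤ T * τ ^ (-γ) * Δ ^ γ := by gcongr

end Real

open Real in
lemma chord_speed_rpow_mul_le {C S τ Δ p θ : ℝ} (hC : 0 ≤ C) (hp : 0 < p) (hθ : p < θ) (hτ : 0 < τ)
    (hτS : τ ≤ S) (hΔ : 0 < Δ) :
    (C * S ^ (1 / θ - 1 / p) * (2 * Δ) ^ (1 - 1 / θ) / Δ) ^ p * Δ
      ≤ (2 * C) ^ p * τ ^ (-(θ - p) / θ) * Δ ^ ((θ - p) / θ) := by
  have hθ0 : 0 < θ := hp.trans hθ
  have hS : 0 < S := hτ.trans_le hτS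
  have hrw : (C * S ^ (1 / θ - 1 / p) * (2 * Δ) ^ (1 - 1 / θ) / Δ) ^ p * Δ
      = C ^ p * S ^ (-(θ - p) / θ) * 2 ^ ((1 - 1 / θ) * p) * Δ ^ ((θ - p) / θ) := by
    have hbase : C * S ^ (1 / θ - 1 / p) * (2 * Δ) ^ (1 - 1 / θ) / Δ
        = C * S ^ (1 / θ - 1 / p) * 2 ^ (1 - 1 / θ) * Δ ^ (-1 / θ) := by
      rw [mul_rpow zero_le_two hΔ.le, div_eq_iff hΔ.ne', mul_assoc _ (Δ ^ _), ← rpow_add_one hΔ.ne']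
      ring_nf
    rw [hbase, mul_rpow (by positivity) (by positivity), mul_rpow (by positivity) (by positivity),
      mul_rpow hC (by positivity), ← rpow_mul hS.le, ← rpow_mul zero_le_two, ← rpow_mul hΔ.le,
      mul_assoc, ← rpow_add_one hΔ.ne',
      show (1 / θ - 1 / p) * p = -(θ - p) / θ by field_simp; ring,
      show -1 / θ * p + 1 = (θ - p) / θ by field_simp; ring]
  rw [hrw, mul_rpow zero_le_two hC]
  have h2 : (2:ℝ) ^ ((1 - 1 / θ) * p) ≤ 2 ^ p :=
    rpow_le_rpow_of_exponent_le one_le_two (by nlinarith [one_div_pos.2 hθ0])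
  have hτS' : S ^ (-(θ - p) / θ) ≤ τ ^ (-(θ - p) / θ) :=
    rpow_le_rpow_of_nonpos hτ hτS (div_nonpos_of_nonpos_of_nonneg (by linarith) hθ0.le)
  calc C ^ p * S ^ (-(θ - p) / θ) * 2 ^ ((1 - 1 / θ) * p) * Δ ^ ((θ - p) / θ)
      ≤ C ^ p * τ ^ (-(θ - p) / θ) * 2 ^ p * Δ ^ ((θ - p) / θ) := by gcongr
    _ = 2 ^ p * C ^ p * τ ^ (-(θ - p) / θ) * Δ ^ ((θ - p) / θ) := by ring

open Real in
lemma chord_cost_le {M C S T τ Δ p θ : ℝ} (hM : 0 ≤ M) (hC : 0 ≤ C) (hp : 1 ≤ p) (hθ : p < θ)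
    (hΔ : 0 < Δ) (hΔτ : Δ ≤ τ) (hτS : τ ≤ S) (hτT : τ ≤ T) :
    M * (M + C * S ^ (1 / θ - 1 / p) * (2 * Δ) ^ (1 - 1 / θ) / Δ) ^ p * Δ
      ≤ M * 2 ^ (p - 1) * (M ^ p * T + (2 * C) ^ p) * τ ^ (-(θ - p) / θ) * Δ ^ ((θ - p) / θ) := by
  have hτ : 0 < τ := hΔ.trans_le hΔτ
  have hS : 0 < S := hτ.trans_le hτS
  set V := C * S ^ (1 / θ - 1 / p) * (2 * Δ) ^ (1 - 1 / θ) / Δ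
  have hV : 0 ≤ V := by positivity
  have hrest : Δ ≤ T * τ ^ (-(θ - p) / θ) * Δ ^ ((θ - p) / θ) := by
    rw [neg_div]
    exact le_mul_rpow_neg_mul_rpow hΔ hΔτ hτT
      (div_le_one_of_le₀ (by linarith) (by linarith))
  have hchord := chord_speed_rpow_mul_le hC (by linarith) hθ hτ hτS hΔ
  calc M * (M + V) ^ p * Δ ≤ M * (2 ^ (p - 1) * (M ^ p + V ^ p)) * Δ := by
        gcongr; exact rpow_add_le_mul_rpow_add_rpow hM hV hp
    _ = M * 2 ^ (p - 1) * (M ^ p * Δ + V ^ p * Δ) := by ring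
    _ ≤ M * 2 ^ (p - 1) * (M ^ p * (T * τ ^ (-(θ - p) / θ) * Δ ^ ((θ - p) / θ))
          + (2 * C) ^ p * τ ^ (-(θ - p) / θ) * Δ ^ ((θ - p) / θ)) := by gcongr
    _ = _ := by ring

lemma MeasureTheory.IntegrableOn.intervalIntegrable_of_Icc {E : Type*} [NormedAddCommGroup E]
    {h : ℝ → E} {t T a b : ℝ} (hf : IntegrableOn h (Icc t T)) (hta : t ≤ a) (hab : a ≤ b)
    (hbT : b ≤ T) : IntervalIntegrable h volume a b :=
  (hf.mono_set (by rw [uIcc_of_le hab]; exact Icc_subset_Icc hta hbT)).intervalIntegrable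

section ValueFunction

variable {N : ℕ} {T p M δ : ℝ} {a : EuclideanSpace ℝ (Fin N) → ℝ → ℝ}
  {f : EuclideanSpace ℝ (Fin N) → ℝ → EuclideanSpace ℝ (Fin N)}
  {g : EuclideanSpace ℝ (Fin N) → ℝ} {x x' w : EuclideanSpace ℝ (Fin N)} {t t' c s : ℝ}
  {v : ℝ → EuclideanSpace ℝ (Fin N)}

def runningCost (p : ℝ) (a : EuclideanSpace ℝ (Fin N) → ℝ → ℝ)
    (f : EuclideanSpace ℝ (Fin N) → ℝ → EuclideanSpace ℝ (Fin N))
    (x : EuclideanSpace ℝ (Fin N)) (t : ℝ) (v : ℝ → EuclideanSpace ℝ (Fin N)) (s : ℝ) : ℝ :=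
  a (curveOf x t v s) s * ‖f (curveOf x t v s) s + v s‖ ^ p

lemma costOf_eq_integral_runningCost_add :
    costOf T p a f g x t v = (∫ s in t..T, runningCost p a f x t v s) + g (curveOf x t v T) :=
  rfl

@[simp]
lemma curveOf_self : curveOf x t v t = x := by
  simp [curveOf]

lemma curveOf_add_integral (htc : IntervalIntegrable v volume t c)
    (hcs : IntervalIntegrable v volume c s) :
    curveOf x t v c + ∫ r in c..s, v r = curveOf x t v s := by
  simp only [curveOf, add_assoc, integral_add_adjacent_intervals htc hcs]

lemma norm_curveOf_sub_le (hts : t ≤ s) : ‖curveOf x t v s - x‖ ≤ ∫ r in t..s, ‖v r‖ := by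
  simpa [curveOf] using intervalIntegral.norm_integral_le_integral_norm hts

lemma curveOf_piecewise_Iio (hx' : x' + (c - t') • w = curveOf x t v c) (ht'c : t' ≤ c)
    (htc : t ≤ c) (hcs : c ≤ s) (hv : IntervalIntegrable v volume t s)
    (hv' : IntervalIntegrable ((Iio c).piecewise (fun _ => w) v) volume t' s) :
    curveOf x' t' ((Iio c).piecewise (fun _ => w) v) s = curveOf x t v s := by
  have hchord : ∫ r in t'..c, (Iio c).piecewise (fun _ => w) v r = (c - t') • w := by
    rw [intervalIntegral.integral_congr_ae (g := fun _ => w) ?_, intervalIntegral.integral_const]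
    filter_upwards [Measure.ae_ne volume c] with r hrc hr
    rw [uIoc_of_le ht'c] at hr
    exact piecewise_eq_of_mem _ _ _ (lt_of_le_of_ne hr.2 hrc)
  have htail : ∫ r in c..s, (Iio c).piecewise (fun _ => w) v r = ∫ r in c..s, v r := by
    refine intervalIntegral.integral_congr fun r hr => piecewise_eq_of_notMem _ _ _ ?_
    rw [uIcc_of_le hcs] at hr
    exact not_lt.mpr hr.1
  have hsub : ∀ {u : ℝ → EuclideanSpace ℝ (Fin N)} {l m n : ℝ}, IntervalIntegrable u volume l n →
      l ≤ m → m ≤ n → IntervalIntegrable u volume l m ∧ IntervalIntegrable u volume m n :=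
    fun hu hlm hmn => ⟨hu.mono_set (uIcc_subset_uIcc_left (mem_uIcc_of_le hlm hmn)),
      hu.mono_set (uIcc_subset_uIcc_right (mem_uIcc_of_le hlm hmn))⟩
  obtain ⟨hv'₁, hv'₂⟩ := hsub hv' ht'c hcs
  obtain ⟨hv₁, hv₂⟩ := hsub hv htc hcs
  rw [← curveOf_add_integral hv'₁ hv'₂, ← curveOf_add_integral hv₁ hv₂, ← hx', htail]
  simp [curveOf, hchord]

lemma continuousOn_curveOf (htT : t ≤ T) (hv : IntegrableOn v (Icc t T)) :
    ContinuousOn (curveOf x t v) (Icc t T) := by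
  rw [← uIcc_of_le htT] at hv ⊢
  exact continuousOn_const.add (continuousOn_primitive_interval hv)

lemma AdmissibleDeriv.integrableOn (hp : 1 ≤ p) (hv : AdmissibleDeriv T p t v) :
    IntegrableOn v (Icc t T) :=
  memLp_one_iff_integrable.mp (hv.mono_exponent (by simpa using hp))

lemma AdmissibleDeriv.piecewise (hv : AdmissibleDeriv T p t v) (htc : t ≤ c) :
    AdmissibleDeriv T p t' ((Iio c).piecewise (fun _ => w) v) := by
  refine MemLp.piecewise measurableSet_Iio (memLp_const w) (hv.mono_measure ?_)
  rw [Measure.restrict_restrict measurableSet_Iio.compl]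
  refine Measure.restrict_mono ?_ le_rfl
  rintro r ⟨hrc, -, hrT⟩
  exact ⟨htc.trans (not_lt.mp hrc), hrT⟩

lemma StandardHyps.bound_nonneg (hyp : StandardHyps T M δ a f g) : 0 ≤ M :=
  (abs_nonneg _).trans (hyp.2.2.2.2.2.1 0)

lemma StandardHyps.runningCost_nonneg (hyp : StandardHyps T M δ a f g) (hδ : 0 ≤ δ)
    (hs : s ∈ Icc 0 T) : 0 ≤ runningCost p a f x t v s := by
  obtain ⟨-, -, -, -, -, -, ha⟩ := hyp
  exact mul_nonneg (hδ.trans (ha _ _ hs)) (Real.rpow_nonneg (norm_nonneg _) _)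

lemma StandardHyps.abs_runningCost_le (hyp : StandardHyps T M δ a f g) (hp : 0 ≤ p)
    (hs : s ∈ Icc 0 T) : |runningCost p a f x t v s| ≤ M * (M + ‖v s‖) ^ p := by
  have hM := hyp.bound_nonneg
  obtain ⟨-, -, -, ha, hf, -, -⟩ := hyp
  rw [runningCost, abs_mul, abs_of_nonneg (Real.rpow_nonneg (norm_nonneg _) _)]
  refine mul_le_mul (ha _ _ hs) ?_ (by positivity) hM
  gcongr
  exact (norm_add_le _ _).trans (by gcongr; exact hf _ _ hs)

lemma StandardHyps.integrableOn_runningCost (hyp : StandardHyps T M δ a f g) (hp : 1 ≤ p)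
    (ht : 0 ≤ t) (htT : t ≤ T) (hv : AdmissibleDeriv T p t v) :
    IntegrableOn (runningCost p a f x t v) (Icc t T) := by
  have hp0 : 0 ≤ p := zero_le_one.trans hp
  have hvI := hv.integrableOn hp
  have hM := hyp.bound_nonneg
  have hpath : ContinuousOn (fun s => (curveOf x t v s, s)) (Icc t T) :=
    (continuousOn_curveOf htT hvI).prodMk continuousOn_id
  have hmaps : MapsTo (fun s => (curveOf x t v s, s)) (Icc t T) (univ ×ˢ Icc 0 T) :=
    fun s hs => ⟨mem_univ _, ht.trans hs.1, hs.2⟩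
  have hmeas : AEStronglyMeasurable (runningCost p a f x t v) (volume.restrict (Icc t T)) := by
    refine ((hyp.1.comp hpath hmaps).aestronglyMeasurable measurableSet_Icc).mul ?_
    refine (Real.continuous_rpow_const hp0).comp_aestronglyMeasurable ?_
    exact (((hyp.2.1.comp hpath hmaps).aestronglyMeasurable measurableSet_Icc).add
      hv.aestronglyMeasurable).norm
  have hvp : IntegrableOn (fun s => ‖v s‖ ^ p) (Icc t T) := by
    have := hv.integrable_norm_rpow (by simp; linarith) ENNReal.ofReal_ne_top
    rwa [ENNReal.toReal_ofReal hp0] at this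
  have hdom : IntegrableOn (fun s => M * 2 ^ (p - 1) * (M ^ p + ‖v s‖ ^ p)) (Icc t T) :=
    ((integrableOn_const measure_Icc_lt_top.ne).add hvp).const_mul _
  refine hdom.mono' hmeas ?_
  filter_upwards [ae_restrict_mem measurableSet_Icc] with s hs
  have hs0 : s ∈ Icc 0 T := ⟨ht.trans hs.1, hs.2⟩
  calc ‖runningCost p a f x t v s‖ ≤ M * (M + ‖v s‖) ^ p := hyp.abs_runningCost_le hp0 hs0
    _ ≤ M * (2 ^ (p - 1) * (M ^ p + ‖v s‖ ^ p)) := by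
      gcongr; exact Real.rpow_add_le_mul_rpow_add_rpow hM (norm_nonneg _) hp
    _ = M * 2 ^ (p - 1) * (M ^ p + ‖v s‖ ^ p) := by ring

lemma StandardHyps.integral_runningCost_nonneg (hyp : StandardHyps T M δ a f g) (hδ : 0 ≤ δ)
    (ht : 0 ≤ t') (ht'c : t' ≤ c) (hcT : c ≤ T) : 0 ≤ ∫ s in t'..c, runningCost p a f x t v s :=
  intervalIntegral.integral_nonneg ht'c fun _ hs =>
    hyp.runningCost_nonneg hδ ⟨ht.trans hs.1, hs.2.trans hcT⟩

lemma StandardHyps.valueFn_le_costOf (hyp : StandardHyps T M δ a f g) (hδ : 0 ≤ δ)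
    (ht : 0 ≤ t) (htT : t ≤ T) (hv : AdmissibleDeriv T p t v) :
    valueFn T p a f g x t ≤ costOf T p a f g x t v := by
  refine csInf_le ⟨-M, ?_⟩ ⟨v, hv, rfl⟩
  rintro _ ⟨u, -, rfl⟩
  have hg := neg_le_of_abs_le (hyp.2.2.2.2.2.1 (curveOf x t u T))
  have hL := hyp.integral_runningCost_nonneg (p := p) (x := x) (t := t) (v := u) hδ ht htT le_rfl
  rw [costOf_eq_integral_runningCost_add]
  linarith

lemma StandardHyps.integral_runningCost_le (hyp : StandardHyps T M δ a f g) (hp : 0 ≤ p)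
    {W : ℝ} (ht : 0 ≤ t') (ht'c : t' ≤ c) (hcT : c ≤ T) (hvW : ∀ s ∈ Ioo t' c, ‖v s‖ ≤ W)
    (hint : IntervalIntegrable (runningCost p a f x t v) volume t' c) :
    ∫ s in t'..c, runningCost p a f x t v s ≤ M * (M + W) ^ p * (c - t') := by
  have hM := hyp.bound_nonneg
  calc ∫ s in t'..c, runningCost p a f x t v s ≤ ∫ _ in t'..c, M * (M + W) ^ p := by
        refine intervalIntegral.integral_mono_on_of_le_Ioo ht'c hint intervalIntegrable_const
          fun s hs => ?_
        refine (le_abs_self _).trans ((hyp.abs_runningCost_le hp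
          ⟨ht.trans hs.1.le, hs.2.le.trans hcT⟩).trans ?_)
        gcongr
        exact hvW s hs
    _ = M * (M + W) ^ p * (c - t') := by rw [intervalIntegral.integral_const, smul_eq_mul, mul_comm]

lemma StandardHyps.costOf_piecewise_Iio_le (hyp : StandardHyps T M δ a f g) (hδ : 0 ≤ δ)
    (hp : 1 ≤ p) {W : ℝ} (ht' : 0 ≤ t') (ht'c : t' ≤ c) (ht : 0 ≤ t) (htc : t ≤ c) (hcT : c ≤ T)
    (hv : AdmissibleDeriv T p t v) (hx' : x' + (c - t') • w = curveOf x t v c) (hw : ‖w‖ ≤ W) :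
    costOf T p a f g x' t' ((Iio c).piecewise (fun _ => w) v)
      ≤ M * (M + W) ^ p * (c - t') + costOf T p a f g x t v := by
  set v' := (Iio c).piecewise (fun _ => w) v
  have hv' : AdmissibleDeriv T p t' v' := hv.piecewise htc
  have hcurve : ∀ s ∈ Icc c T, curveOf x' t' v' s = curveOf x t v s := fun s hs =>
    curveOf_piecewise_Iio hx' ht'c htc hs.1
      ((hv.integrableOn hp).intervalIntegrable_of_Icc le_rfl (htc.trans hs.1) hs.2)
      ((hv'.integrableOn hp).intervalIntegrable_of_Icc le_rfl (ht'c.trans hs.1) hs.2)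
  have htail : ∫ s in c..T, runningCost p a f x' t' v' s
      = ∫ s in c..T, runningCost p a f x t v s := by
    refine intervalIntegral.integral_congr fun s hs => ?_
    rw [uIcc_of_le hcT] at hs
    simp only [runningCost, hcurve s hs, v',
      piecewise_eq_of_notMem (Iio c) (fun _ => w) v (not_lt.mpr hs.1)]
  have hL' := hyp.integrableOn_runningCost (x := x') hp ht' (ht'c.trans hcT) hv'
  have hL := hyp.integrableOn_runningCost (x := x) hp ht (htc.trans hcT) hv
  have hhead := hyp.integral_runningCost_le (x := x') (t := t') (v := v') (zero_le_one.trans hp)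
    (W := W) ht' ht'c hcT
    (fun s hs => by simpa [v', piecewise_eq_of_mem (Iio c) (fun _ => w) v hs.2] using hw)
    (hL'.intervalIntegrable_of_Icc le_rfl ht'c hcT)
  have hpre := hyp.integral_runningCost_nonneg (p := p) (x := x) (t := t) (v := v) hδ ht htc hcT
  calc costOf T p a f g x' t' v'
    _ = (∫ s in t'..c, runningCost p a f x' t' v' s)
          + ((∫ s in c..T, runningCost p a f x t v s) + g (curveOf x t v T)) := by
      rw [costOf_eq_integral_runningCost_add, ← integral_add_adjacent_intervals
        (hL'.intervalIntegrable_of_Icc le_rfl ht'c hcT)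
        (hL'.intervalIntegrable_of_Icc ht'c hcT le_rfl), htail, hcurve T ⟨hcT, le_rfl⟩, add_assoc]
    _ ≤ M * (M + W) ^ p * (c - t') + ((∫ s in t..c, runningCost p a f x t v s)
          + (∫ s in c..T, runningCost p a f x t v s) + g (curveOf x t v T)) := by
      linarith
    _ = M * (M + W) ^ p * (c - t') + costOf T p a f g x t v := by
      rw [integral_add_adjacent_intervals (hL.intervalIntegrable_of_Icc le_rfl htc hcT)
        (hL.intervalIntegrable_of_Icc htc hcT le_rfl), ← costOf_eq_integral_runningCost_add]

lemma StandardHyps.valueFn_le_valueFn_add_of_splice (hyp : StandardHyps T M δ a f g)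
    (hδ : 0 ≤ δ) (hp : 1 ≤ p) {W : ℝ} (ht' : 0 ≤ t') (ht'c : t' ≤ c) (ht : 0 ≤ t) (htc : t ≤ c)
    (hcT : c ≤ T) (hv : IsOptimalCurve T p a f g x t v)
    (hx' : x' + (c - t') • w = curveOf x t v c) (hw : ‖w‖ ≤ W) :
    valueFn T p a f g x' t' ≤ valueFn T p a f g x t + M * (M + W) ^ p * (c - t') := by
  calc valueFn T p a f g x' t' ≤ costOf T p a f g x' t' ((Iio c).piecewise (fun _ => w) v) :=
        hyp.valueFn_le_costOf hδ ht' (ht'c.trans hcT) (hv.1.piecewise htc)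
    _ ≤ M * (M + W) ^ p * (c - t') + costOf T p a f g x t v :=
        hyp.costOf_piecewise_Iio_le hδ hp ht' ht'c ht htc hcT hv.1 hx' hw
    _ = valueFn T p a f g x t + M * (M + W) ^ p * (c - t') := by rw [hv.2, add_comm]

lemma StandardHyps.valueFn_le_valueFn_add_of_rest (hyp : StandardHyps T M δ a f g) (hδ : 0 ≤ δ)
    (hp : 1 ≤ p) {W t₀ t₁ : ℝ} (hW : 0 ≤ W) (h0 : 0 ≤ t₀) (h01 : t₀ ≤ t₁) (h1T : t₁ ≤ T)
    (hv : IsOptimalCurve T p a f g x t₁ v) :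
    valueFn T p a f g x t₀ ≤ valueFn T p a f g x t₁ + M * (M + W) ^ p * (t₁ - t₀) :=
  hyp.valueFn_le_valueFn_add_of_splice (w := 0) hδ hp h0 h01 (h0.trans h01) le_rfl h1T hv
    (by simp) (by simpa using hW)

lemma StandardHyps.valueFn_le_valueFn_add_of_chord (hyp : StandardHyps T M δ a f g) (hδ : 0 ≤ δ)
    (hp : 1 ≤ p) {R t₀ t₁ : ℝ} (h0 : 0 ≤ t₀) (h01 : t₀ < t₁) (hT : t₀ + 2 * (t₁ - t₀) ≤ T)
    (hv : IsOptimalCurve T p a f g x t₀ v) (hR : ∫ s in t₀..t₀ + 2 * (t₁ - t₀), ‖v s‖ ≤ R) :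
    valueFn T p a f g x t₁ ≤ valueFn T p a f g x t₀ + M * (M + R / (t₁ - t₀)) ^ p * (t₁ - t₀) := by
  have hΔ : 0 < t₁ - t₀ := sub_pos.mpr h01
  have hc : t₀ + 2 * (t₁ - t₀) - t₁ = t₁ - t₀ := by ring
  have := hyp.valueFn_le_valueFn_add_of_splice (x' := x)
    (t' := t₁) (t := t₀) (c := t₀ + 2 * (t₁ - t₀))
    (w := (t₁ - t₀)⁻¹ • (curveOf x t₀ v (t₀ + 2 * (t₁ - t₀)) - x)) (W := R / (t₁ - t₀))
    hδ hp (by linarith) (by linarith) h0 (by linarith) hT hv ?_ ?_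
  · rwa [hc] at this
  · rw [hc, smul_smul, mul_inv_cancel₀ hΔ.ne', one_smul, add_sub_cancel]
  · rw [norm_smul, Real.norm_of_nonneg (inv_nonneg.mpr hΔ.le), inv_mul_eq_div]
    gcongr
    exact (norm_curveOf_sub_le (by linarith)).trans hR

end ValueFunction

/-- time regularity: with `θ > p` the exponent of the integral estimate for
optimal curves, there are constants `K₂, K₃ > 0` depending only on `M, δ, p, T` such that for
every `τ > 0`, every `x₀` and all `t₀ < t₁ ≤ T - τ` with
`t₁ - t₀ ≤ K₃ τ^{(2θp-p-θ)/(p(θ-1))}`, one has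
`|u(x₀,t₀) - u(x₀,t₁)| ≤ K₂ τ^{-(θ-p)/θ} (t₁-t₀)^{(θ-p)/θ}`. -/
theorem time_regularity_of_value_function
    (T p M δ : ℝ) (hT : 0 < T) (hp : 1 < p) (hM : 0 < M) (hδ : 0 < δ)
    (C θ : ℝ) (hC : 0 < C) (hθ : p < θ) :
    ∃ K₂ > (0:ℝ), ∃ K₃ > (0:ℝ),
      ∀ (N : ℕ), 1 ≤ N →
        ∀ (a : EuclideanSpace ℝ (Fin N) → ℝ → ℝ)
          (f : EuclideanSpace ℝ (Fin N) → ℝ → EuclideanSpace ℝ (Fin N))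
          (g : EuclideanSpace ℝ (Fin N) → ℝ), StandardHyps T M δ a f g →
          -- every initial condition admits an optimal curve
          (∀ (x : EuclideanSpace ℝ (Fin N)) (t : ℝ), t ∈ Ico 0 T →
            ∃ v, IsOptimalCurve T p a f g x t v) →
          -- the integral estimate for optimal curves, with constants `C` and `θ`
          (∀ (x : EuclideanSpace ℝ (Fin N)) (t : ℝ), t ∈ Ico 0 T →
            ∀ v : ℝ → EuclideanSpace ℝ (Fin N), IsOptimalCurve T p a f g x t v →
              ∀ h ∈ Icc 0 (T - t),
                ∫ s in t..t + h, ‖v s‖ ≤ C * (T - t) ^ (1 / θ - 1 / p) * h ^ (1 - 1 / θ)) →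
          ∀ τ > (0:ℝ), ∀ (x₀ : EuclideanSpace ℝ (Fin N)) (t₀ t₁ : ℝ),
            0 ≤ t₀ → t₀ < t₁ → t₁ ≤ T - τ →
            t₁ - t₀ ≤ K₃ * τ ^ ((2 * θ * p - p - θ) / (p * (θ - 1))) →
            |valueFn T p a f g x₀ t₀ - valueFn T p a f g x₀ t₁| ≤
              K₂ * τ ^ (-(θ - p) / θ) * (t₁ - t₀) ^ ((θ - p) / θ) := by
  have hβ : 1 ≤ (2 * θ * p - p - θ) / (p * (θ - 1)) := by
    rw [le_div_iff₀ (by nlinarith)]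
    nlinarith
  refine ⟨M * 2 ^ (p - 1) * (M ^ p * T + (2 * C) ^ p), by positivity,
    T ^ (1 - (2 * θ * p - p - θ) / (p * (θ - 1))), by positivity, ?_⟩
  intro N _ a f g hyp hex hest τ hτ x₀ t₀ t₁ h0 h01 h1T hK₃
  have hΔτ : t₁ - t₀ ≤ τ := Real.le_of_le_rpow_one_sub_mul_rpow hτ (by linarith) hβ hK₃
  obtain ⟨v₀, hv₀⟩ := hex x₀ t₀ ⟨h0, by linarith⟩
  obtain ⟨v₁, hv₁⟩ := hex x₀ t₁ ⟨by linarith, by linarith⟩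
  have hR := hest x₀ t₀ ⟨h0, by linarith⟩ v₀ hv₀ (2 * (t₁ - t₀)) ⟨by linarith, by linarith⟩
  have hchord := hyp.valueFn_le_valueFn_add_of_chord hδ.le hp.le h0 h01 (by linarith) hv₀ hR
  have hS : 0 < T - t₀ := by linarith
  have hrest := hyp.valueFn_le_valueFn_add_of_rest hδ.le hp.le (t₀ := t₀)
    (W := C * (T - t₀) ^ (1 / θ - 1 / p) * (2 * (t₁ - t₀)) ^ (1 - 1 / θ) / (t₁ - t₀))
    (by have := sub_pos.mpr h01; positivity) h0 h01.le (by linarith) hv₁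
  refine (abs_sub_le_iff.mpr
    ⟨sub_le_iff_le_add'.mpr hrest, sub_le_iff_le_add'.mpr hchord⟩).trans ?_
  exact chord_cost_le hM.le hC.le hp.le hθ (by linarith) hΔτ (by linarith) (by linarith)
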